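/- arXiv:2504.16555 — 4 statements merged into one kernel-verified Lean document; each statement's English description precedes it below -/
import Mathlib

section
/- Let ψ: ℝ → ℝ be convex and differentiable, b > 0, and define the truncation [z]_b = max(min(z, b), −b). Then for any z' ∈ [−b, b] and all z ∈ ℝ, d_ψ([z]_b, z') ≤ d_ψ(z, z'). -/
theorem dpsi_truncation (ψ : ℝ → ℝ) (hconv : ConvexOn ℝ Set.univ ψ)
    (hdiff : Differentiable ℝ ψ) (b : ℝ) (hb : 0 < b)
    (z' : ℝ) (hz' : z' ∈ Set.Icc (-b) b) (z : ℝ) :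
    ψ (max (min z b) (-b)) / 2 + ψ z' / 2 - ψ ((max (min z b) (-b)) / 2 + z' / 2)
      ≤ ψ z / 2 + ψ z' / 2 - ψ (z / 2 + z' / 2) := by
  obtain ⟨hz'1, hz'2⟩ := hz'
  set g : ℝ → ℝ := fun t => ψ t / 2 - ψ (t / 2 + z' / 2) with hg
  have hmono : Monotone (deriv ψ) :=
    fun x y hxy => hconv.monotoneOn_deriv (fun t _ => hdiff t) trivial trivial hxy
  have hgd : Differentiable ℝ g := by
    apply Differentiable.sub
    · exact hdiff.div_const 2
    · exact (hdiff.comp ((differentiable_id.div_const 2).add_const (z' / 2)))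
  have hderiv : ∀ t : ℝ, deriv g t = deriv ψ t / 2 - deriv ψ (t / 2 + z' / 2) / 2 := by
    intro t
    have h1 : HasDerivAt (fun t : ℝ => t / 2 + z' / 2) (1 / 2) t := by
      simpa using ((hasDerivAt_id t).div_const 2).add_const (z' / 2)
    have h2 : HasDerivAt (fun t => ψ (t / 2 + z' / 2)) (deriv ψ (t / 2 + z' / 2) * (1 / 2)) t :=
      (hdiff (t / 2 + z' / 2)).hasDerivAt.comp t h1
    have h3 : HasDerivAt g (deriv ψ t / 2 - deriv ψ (t / 2 + z' / 2) * (1 / 2)) t :=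
      ((hdiff t).hasDerivAt.div_const 2).sub h2
    rw [h3.deriv]; ring
  -- g is monotone on [z', ∞) and antitone on (-∞, z']
  have hmonoI : MonotoneOn g (Set.Ici z') := by
    apply monotoneOn_of_deriv_nonneg (convex_Ici z') hgd.continuous.continuousOn
      hgd.differentiableOn
    intro t ht
    rw [interior_Ici] at ht
    rw [hderiv t]
    have ht' : z' < t := ht
    have : t / 2 + z' / 2 ≤ t := by linarith
    have := hmono this
    linarith
  have hantiI : AntitoneOn g (Set.Iic z') := by
    apply antitoneOn_of_deriv_nonpos (convex_Iic z') hgd.continuous.continuousOn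
      hgd.differentiableOn
    intro t ht
    rw [interior_Iic] at ht
    rw [hderiv t]
    have ht' : t < z' := ht
    have : t ≤ t / 2 + z' / 2 := by linarith
    have := hmono this
    linarith
  have key : g (max (min z b) (-b)) ≤ g z := by
    rcases le_total z (-b) with h | h
    · have : max (min z b) (-b) = -b := by
        rw [max_eq_right]; exact le_trans (min_le_left z b) (le_trans h (by linarith))
      rw [this]
      exact hantiI (le_trans h hz'1) hz'1 h
    · rcases le_total z b with h2 | h2
      · have : max (min z b) (-b) = z := by rw [min_eq_left h2, max_eq_left h]
        rw [this]
      · have : max (min z b) (-b) = b := by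
          rw [min_eq_right h2, max_eq_left (by linarith)]
        rw [this]
        exact hmonoI hz'2 (le_trans hz'2 h2) h2
  simp only [hg] at key
  linarith
end

section
/- Let x_1, ..., x_n ∈ ℝ^d with Euclidean norms ‖x_t‖₂ ≤ L, and let Λ_n = Σ_{t=1}^n x_t x_tᵀ. Then for every α > 0, log det(α Λ_n + Id) ≤ rank(Λ_n) · log(1 + α n L² / rank(Λ_n)). -/
/-!
Λ is positive semidefinite, so det(αΛ + 1) = ∏ᵢ (1 + αμᵢ) over its eigenvalues μᵢ ≥ 0, of which
exactly r = rank Λ are nonzero. Jensen's inequality for the concave logarithm over these r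
eigenvalues gives ∑ᵢ log(1 + αμᵢ) ≤ r log(1 + α tr Λ / r), and tr Λ = ∑ₜ ‖xₜ‖² ≤ nL².
-/

open Matrix Finset

namespace Matrix.IsHermitian
variable {n 𝕜 : Type*} [Fintype n] [DecidableEq n] [RCLike 𝕜] {A : Matrix n n 𝕜}

lemma det_cfc (hA : A.IsHermitian) (f : ℝ → ℝ) :
    (cfc f A).det = ∏ i, (f (hA.eigenvalues i) : 𝕜) := by
  rw [hA.cfc_eq, IsHermitian.cfc, Unitary.conjStarAlgAut_apply, det_mul_right_comm,
    Unitary.mul_star_self_of_mem hA.eigenvectorUnitary.2, one_mul, det_diagonal]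
  rfl

lemma det_add_one (hA : A.IsHermitian) :
    (A + 1).det = ∏ i, (1 + hA.eigenvalues i : 𝕜) := by
  have h : cfc (fun x : ℝ ↦ x + 1) A = A + 1 := by
    rw [cfc_add_const 1 (fun x ↦ x) A, cfc_id' ℝ A, map_one]
  rw [← h, hA.det_cfc]
  simp [add_comm]

end Matrix.IsHermitian

lemma Real.sum_log_one_add_le_card_mul_log {ι : Type*} {s : Finset ι} (hs : s.Nonempty)
    {a : ι → ℝ} (ha : ∀ i ∈ s, 0 ≤ a i) :
    ∑ i ∈ s, Real.log (1 + a i) ≤ #s * Real.log (1 + (∑ i ∈ s, a i) / #s) := by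
  have hcard : (0 : ℝ) < #s := by exact_mod_cast hs.card_pos
  have hjensen := strictConcaveOn_log_Ioi.concaveOn.le_map_sum
    (t := s) (w := fun _ ↦ (#s : ℝ)⁻¹) (p := fun i ↦ 1 + a i) (fun _ _ ↦ by positivity)
    (by simp [hcard.ne']) (fun i hi ↦ Set.mem_Ioi.mpr (by linarith [ha i hi]))
  have hmean : ∑ i ∈ s, (#s : ℝ)⁻¹ • (1 + a i) = 1 + (∑ i ∈ s, a i) / #s := by
    simp only [smul_eq_mul, ← mul_sum, sum_add_distrib, sum_const, nsmul_eq_mul, mul_one]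
    field_simp
  rw [← smul_sum, hmean, smul_eq_mul] at hjensen
  rwa [inv_mul_le_iff₀ hcard] at hjensen

lemma EuclideanSpace.trace_vecMulVec_self {ι : Type*} [Fintype ι] (v : EuclideanSpace ℝ ι) :
    (vecMulVec v v).trace = ‖v‖ ^ 2 := by
  rw [trace_vecMulVec, ← real_inner_self_eq_norm_sq, EuclideanSpace.inner_eq_star_dotProduct,
    star_trivial]

lemma EuclideanSpace.trace_sum_vecMulVec_self_le {ι κ : Type*} [Fintype ι] [Fintype κ]
    {x : ι → EuclideanSpace ℝ κ} {L : ℝ} (hL : ∀ t, ‖x t‖ ≤ L) :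
    (∑ t, vecMulVec (x t) (x t)).trace ≤ Fintype.card ι * L ^ 2 := by
  rw [trace_sum]
  calc ∑ t, (vecMulVec (x t) (x t)).trace = ∑ t, ‖x t‖ ^ 2 := by
        simp only [trace_vecMulVec_self]
    _ ≤ ∑ _t : ι, L ^ 2 := by gcongr with t; exact hL t
    _ = Fintype.card ι * L ^ 2 := by simp

theorem Matrix.PosSemidef.log_det_add_one_le {n : Type*} [Fintype n] [DecidableEq n]
    {A : Matrix n n ℝ} (hA : A.PosSemidef) (hrank : A.rank ≠ 0) :
    Real.log (A + 1).det ≤ A.rank * Real.log (1 + A.trace / A.rank) := by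
  set μ := hA.isHermitian.eigenvalues
  set s := univ.filter (μ · ≠ 0)
  have hcard : #s = A.rank := by
    rw [hA.isHermitian.rank_eq_card_non_zero_eigs, Fintype.card_subtype]
  have htrace : A.trace = ∑ i ∈ s, μ i := by
    simpa [s, sum_filter_ne_zero] using hA.isHermitian.trace_eq_sum_eigenvalues
  have hlogdet : Real.log (A + 1).det = ∑ i ∈ s, Real.log (1 + μ i) := by
    have hdet : (A + 1).det = ∏ i, (1 + μ i) := by simpa using hA.isHermitian.det_add_one
    rw [hdet, Real.log_prod fun i _ ↦ by linarith [hA.eigenvalues_nonneg i]]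
    exact (sum_filter_of_ne (p := (μ · ≠ 0)) fun i _ hlog hμ ↦ hlog (by simp [hμ])).symm
  rw [hlogdet, htrace, ← hcard]
  exact Real.sum_log_one_add_le_card_mul_log (card_ne_zero.mp (hcard ▸ hrank))
    fun i _ ↦ hA.eigenvalues_nonneg i

theorem logdet_rank_bound (d n : ℕ) (x : Fin n → EuclideanSpace ℝ (Fin d))
    (L : ℝ) (hL : ∀ t, ‖x t‖ ≤ L)
    (Λ : Matrix (Fin d) (Fin d) ℝ)
    (hΛ : Λ = ∑ t, Matrix.vecMulVec (x t) (x t))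
    (hrank : 1 ≤ Λ.rank)
    (α : ℝ) (hα : 0 < α) :
    Real.log (α • Λ + 1).det ≤
      (Λ.rank : ℝ) * Real.log (1 + α * n * L ^ 2 / (Λ.rank : ℝ)) := by
  have hΛpsd : Λ.PosSemidef := hΛ ▸ posSemidef_sum _ fun t _ ↦ by
    simpa using posSemidef_vecMulVec_self_star (x t).ofLp
  have hrank_smul : (α • Λ).rank = Λ.rank :=
    rank_smul_of_mem_nonZeroDivisors _ (mem_nonZeroDivisors_of_ne_zero hα.ne')
  have htrace : Λ.trace ≤ n * L ^ 2 := by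
    have := EuclideanSpace.trace_sum_vecMulVec_self_le hL
    rwa [Fintype.card_fin, ← hΛ] at this
  calc Real.log (α • Λ + 1).det
      ≤ Λ.rank * Real.log (1 + (α • Λ).trace / Λ.rank) :=
        hrank_smul ▸ (hΛpsd.smul hα.le).log_det_add_one_le (by omega)
    _ ≤ Λ.rank * Real.log (1 + α * n * L ^ 2 / Λ.rank) := by
        have htrace_nonneg := hΛpsd.trace_nonneg
        rw [trace_smul, smul_eq_mul, mul_assoc]
        gcongr
end

section
/- Let ρ: ℝ^d → ℝ be convex differentiable with ∫ exp(−ρ) < ∞, let ℓ_1, ..., ℓ_n: ℝ^d → ℝ be convex differentiable, λ > 0, Z(θ) = λ Σ_t ℓ_t(θ) + ρ(θ) with minimizer θ̂. Then the EWA forecaster with prior q_1 ∝ e^{−ρ} has scaled regret satisfying, for all θ̄ with ρ(θ̄) < ∞: regret_{q^n,λ}(θ̄) ≤ (ρ(θ̄) + γ)/λ, where γ = −log( ∫ exp(−B_Z(θ, θ̂)) dθ / ∫ exp(−ρ(θ)) dθ ) is the Bregman information gain. -/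
open MeasureTheory
open scoped RealInnerProductSpace

/-- Regret bound for the EWA forecaster with prior `q₁ ∝ e^{-ρ}` in terms of the
Bregman information gain. -/
theorem ewa_regret_bregman_info_gain (d n : ℕ)
    (ρ : EuclideanSpace ℝ (Fin d) → ℝ)
    (hρconv : ConvexOn ℝ Set.univ ρ) (hρdiff : Differentiable ℝ ρ)
    (hρint : Integrable (fun θ => Real.exp (-ρ θ)))
    (ℓ : ℕ → EuclideanSpace ℝ (Fin d) → ℝ)
    (hℓconv : ∀ t, ConvexOn ℝ Set.univ (ℓ t)) (hℓdiff : ∀ t, Differentiable ℝ (ℓ t))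
    (lam : ℝ) (hlam : 0 < lam)
    (Z : EuclideanSpace ℝ (Fin d) → ℝ)
    (hZ : Z = fun θ => lam * ∑ t ∈ Finset.range n, ℓ t θ + ρ θ)
    (θhat : EuclideanSpace ℝ (Fin d)) (hθhat : ∀ θ, Z θhat ≤ Z θ)
    -- the Bregman information gain
    (γ : ℝ)
    (hγ : γ = -Real.log ((∫ θ, Real.exp (-(Z θ - Z θhat - ⟪θ - θhat, gradient Z θhat⟫))) /
        ∫ θ, Real.exp (-ρ θ)))
    -- partition functions of EWA (w.r.t. the prior density e^{-ρ}) are integrable, positive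
    (hint : ∀ t, t ≤ n → Integrable
      (fun θ => Real.exp (-(lam * ∑ s ∈ Finset.range t, ℓ s θ)) * Real.exp (-ρ θ)))
    (hpos : ∀ t, t ≤ n →
      0 < ∫ θ, Real.exp (-(lam * ∑ s ∈ Finset.range t, ℓ s θ)) * Real.exp (-ρ θ))
    -- `L t` is the scaled log loss of the EWA mixture `q_t` on round `t`
    (L : ℕ → ℝ)
    (hL : ∀ t, L t = -(1 / lam) * Real.log
      ((∫ θ, Real.exp (-(lam * ∑ s ∈ Finset.range (t + 1), ℓ s θ)) * Real.exp (-ρ θ)) /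
        ∫ θ, Real.exp (-(lam * ∑ s ∈ Finset.range t, ℓ s θ)) * Real.exp (-ρ θ)))
    (θbar : EuclideanSpace ℝ (Fin d)) :
    (∑ t ∈ Finset.range n, L t) - ∑ t ∈ Finset.range n, ℓ t θbar ≤ (ρ θbar + γ) / lam := by

  have hZdiff : Differentiable ℝ Z := by
    rw [hZ]
    exact (Differentiable.const_mul (Differentiable.fun_sum fun t _ => hℓdiff t) lam).add hρdiff
  have hfd : fderiv ℝ Z θhat = 0 := by
    have hmin : IsLocalMin Z θhat := Filter.Eventually.of_forall hθhat
    exact hmin.fderiv_eq_zero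
  have hgrad : gradient Z θhat = 0 := by
    simp [gradient, hfd]
  -- notation for partition functions
  set I : ℕ → ℝ := fun t =>
    ∫ θ, Real.exp (-(lam * ∑ s ∈ Finset.range t, ℓ s θ)) * Real.exp (-ρ θ) with hIdef
  have hI0 : (0:ℝ) < I 0 := hpos 0 (Nat.zero_le n)
  have hIn : (0:ℝ) < I n := hpos n le_rfl
  -- the Bregman integral equals exp(Z θhat) * I n
  have hBint : (∫ θ, Real.exp (-(Z θ - Z θhat - ⟪θ - θhat, gradient Z θhat⟫)))
      = Real.exp (Z θhat) * I n := by
    rw [hgrad]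
    have : ∀ θ : EuclideanSpace ℝ (Fin d),
        Real.exp (-(Z θ - Z θhat - ⟪θ - θhat, (0 : EuclideanSpace ℝ (Fin d))⟫))
        = Real.exp (Z θhat) *
          (Real.exp (-(lam * ∑ s ∈ Finset.range n, ℓ s θ)) * Real.exp (-ρ θ)) := by
      intro θ
      rw [inner_zero_right, ← Real.exp_add, ← Real.exp_add, hZ]
      ring_nf
    simp_rw [this]
    rw [integral_const_mul]
  have hI0eq : (∫ θ, Real.exp (-ρ θ)) = I 0 := by simp [hIdef]
  have hγ' : γ = -(Z θhat) - (Real.log (I n) - Real.log (I 0)) := by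
    rw [hγ, hBint, hI0eq, Real.log_div (by positivity) hI0.ne', Real.log_mul (Real.exp_pos _).ne'
      hIn.ne', Real.log_exp]
    ring
  -- telescoping sum for the losses
  have hsum : (∑ t ∈ Finset.range n, L t)
      = -(1 / lam) * (Real.log (I n) - Real.log (I 0)) := by
    have hLt : ∀ t ∈ Finset.range n, L t
        = -(1 / lam) * (Real.log (I (t + 1)) - Real.log (I t)) := by
      intro t ht
      have htn : t < n := Finset.mem_range.mp ht
      rw [hL t, Real.log_div (hpos (t + 1) htn).ne' (hpos t htn.le).ne']
    rw [Finset.sum_congr rfl hLt, ← Finset.mul_sum, Finset.sum_range_sub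
      (fun t => Real.log (I t))]
  have hkey : Z θhat ≤ Z θbar := hθhat θbar
  have hZbar : Z θbar = lam * ∑ t ∈ Finset.range n, ℓ t θbar + ρ θbar := by rw [hZ]
  rw [hsum, hγ', le_div_iff₀ hlam]
  have hlam' : lam ≠ 0 := hlam.ne'
  field_simp
  nlinarith [hkey, hZbar]
end

section
/- Let ψ be convex differentiable with exponential-family MGF identity: for the true parameter θ⋆ and F_{t−1}-measurable β, log E[e^{β Y_t} | F_{t−1}] = ψ(β + ⟨θ⋆, X_t⟩) − ψ(⟨θ⋆, X_t⟩). Fix η ∈ (0,1] and define shifted losses ℓ_t^{(η)}(θ) = ℓ_t(ηθ + (1−η)θ⋆), where ℓ_t(θ) = −⟨θ, X_t⟩Y_t + ψ(⟨θ, X_t⟩) − log h(Y_t). Then for any F_{t−1}-measurable θ, E[exp(ℓ_t(θ⋆) − ℓ_t^{(η)}(θ)) | F_{t−1}] = 1. -/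
open MeasureTheory
open scoped RealInnerProductSpace

/-- The shifted loss increment `exp(ℓ_t(θ⋆) - ℓ_t^{(η)}(θ))` has conditional
expectation one given the past, for any predictably chosen `θ`. -/
theorem shifted_loss_condexp_one {Ω : Type*} (𝒢 : MeasurableSpace Ω) {m0 : MeasurableSpace Ω}
    {μ : Measure Ω} [IsProbabilityMeasure μ]
    (h𝒢 : 𝒢 ≤ m0)
    (d : ℕ) (ψ : ℝ → ℝ) (hψconv : ConvexOn ℝ Set.univ ψ) (hψdiff : Differentiable ℝ ψ)
    (h : ℝ → ℝ)
    (X : Ω → EuclideanSpace ℝ (Fin d)) (hX : StronglyMeasurable[𝒢] X)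
    (Y : Ω → ℝ) (hY : Measurable Y)
    (θstar : EuclideanSpace ℝ (Fin d))
    -- exponential-family conditional MGF identity
    (hmgf : ∀ β : Ω → ℝ, StronglyMeasurable[𝒢] β →
      (μ[fun ω => Real.exp (β ω * Y ω) | 𝒢]) =ᵐ[μ]
        fun ω => Real.exp (ψ (β ω + ⟪θstar, X ω⟫) - ψ ⟪θstar, X ω⟫))
    (η : ℝ) (hη : η ∈ Set.Ioc (0 : ℝ) 1)
    (θ : Ω → EuclideanSpace ℝ (Fin d)) (hθ : StronglyMeasurable[𝒢] θ)
    (ℓ : EuclideanSpace ℝ (Fin d) → Ω → ℝ)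
    (hℓ : ℓ = fun ϑ ω => -⟪ϑ, X ω⟫ * Y ω + ψ ⟪ϑ, X ω⟫ - Real.log (h (Y ω))) :
    (μ[fun ω => Real.exp (ℓ θstar ω - ℓ (η • θ ω + (1 - η) • θstar) ω) | 𝒢]) =ᵐ[μ]
      fun _ => (1 : ℝ) := by
  -- notation
  set s : Ω → ℝ := fun ω => ⟪θstar, X ω⟫ with hs_def
  set β : Ω → ℝ := fun ω => ⟪η • θ ω + (1 - η) • θstar, X ω⟫ - ⟪θstar, X ω⟫ with hβ_def
  set c : Ω → ℝ := fun ω => Real.exp (ψ (s ω) - ψ (β ω + s ω)) with hc_def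
  set g : Ω → ℝ := fun ω => Real.exp (β ω * Y ω) with hg_def
  have hψcont : Continuous ψ := hψdiff.continuous
  -- measurability
  have hsmeas : StronglyMeasurable[𝒢] s :=
    continuous_inner.comp_stronglyMeasurable (stronglyMeasurable_const.prodMk hX)
  have hvmeas : StronglyMeasurable[𝒢] (fun ω => η • θ ω + (1 - η) • θstar) :=
    (hθ.const_smul η).add stronglyMeasurable_const
  have hβmeas : StronglyMeasurable[𝒢] β :=
    (continuous_inner.comp_stronglyMeasurable (hvmeas.prodMk hX)).sub hsmeas
  have hcmeas : StronglyMeasurable[𝒢] c :=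
    (Real.continuous_exp.comp_stronglyMeasurable
      ((hψcont.comp_stronglyMeasurable hsmeas).sub
        (hψcont.comp_stronglyMeasurable (hβmeas.add hsmeas))))
  have hYm : StronglyMeasurable[m0] Y := hY.stronglyMeasurable
  have hgmeas : StronglyMeasurable[m0] g :=
    Real.continuous_exp.comp_stronglyMeasurable ((hβmeas.mono h𝒢).mul hYm)
  -- rewrite the integrand
  have hF : (fun ω => Real.exp (ℓ θstar ω - ℓ (η • θ ω + (1 - η) • θstar) ω))
      = fun ω => c ω * g ω := by
    subst hℓ
    funext ω
    rw [hc_def, hg_def, ← Real.exp_add]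
    congr 1
    simp only [hβ_def, hs_def]
    ring
  -- the MGF identity for β
  have hmgfβ := hmgf β hβmeas
  -- integrability of g
  have hgint : Integrable g μ := by
    by_contra hni
    rw [condExp_of_not_integrable hni] at hmgfβ
    haveI : (ae μ).NeBot := ae_neBot.2 (IsProbabilityMeasure.ne_zero μ)
    obtain ⟨ω, hω⟩ := hmgfβ.exists
    exact absurd hω.symm (Real.exp_pos _).ne'
  -- truncation sets
  set A : ℕ → Set Ω := fun n => {ω | c ω ≤ n} with hA_def
  have hA𝒢 : ∀ n, MeasurableSet[𝒢] (A n) :=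
    fun n => measurableSet_le hcmeas.measurable measurable_const
  have hAm0 : ∀ n, MeasurableSet[m0] (A n) := fun n => h𝒢 _ (hA𝒢 n)
  have hcnonneg : ∀ ω, 0 ≤ c ω := fun ω => (Real.exp_pos _).le
  have hgnonneg : ∀ ω, 0 ≤ g ω := fun ω => (Real.exp_pos _).le
  have hAmono : ∀ (m n : ℕ), m ≤ n → A m ⊆ A n := by
    intro m n hmn ω hω
    simp only [hA_def, Set.mem_setOf_eq] at hω ⊢
    exact hω.trans (Nat.cast_le.2 hmn)
  have hAcover : ∀ ω, ∃ n : ℕ, ω ∈ A n := fun ω => exists_nat_ge (c ω)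
  -- truncated products
  set fn : ℕ → Ω → ℝ := fun n ω => Set.indicator (A n) c ω * g ω with hfn_def
  have hfn_meas𝒢 : ∀ n, StronglyMeasurable[𝒢] (Set.indicator (A n) c) :=
    fun n => hcmeas.indicator (hA𝒢 n)
  have hfn_bd : ∀ n ω, ‖Set.indicator (A n) c ω‖ ≤ (n : ℝ) := by
    intro n ω
    by_cases hω : ω ∈ A n
    · rw [Set.indicator_of_mem hω, Real.norm_eq_abs, abs_of_nonneg (hcnonneg ω)]
      exact hω
    · rw [Set.indicator_of_notMem hω, norm_zero]
      exact Nat.cast_nonneg n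
  have hfn_int : ∀ n, Integrable (fn n) μ := by
    intro n
    exact hgint.bdd_mul ((hfn_meas𝒢 n).mono h𝒢).aestronglyMeasurable (Filter.Eventually.of_forall (hfn_bd n))
  -- pull-out property for the truncated products
  have hpull : ∀ n, (μ[fn n|𝒢]) =ᵐ[μ] Set.indicator (A n) (fun _ => (1 : ℝ)) := by
    intro n
    have h1 : (μ[fn n|𝒢]) =ᵐ[μ] Set.indicator (A n) c * μ[g|𝒢] :=
      condExp_mul_of_stronglyMeasurable_left (hfn_meas𝒢 n) (hfn_int n) hgint
    refine h1.trans ?_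
    filter_upwards [hmgfβ] with ω hω
    simp only [Pi.mul_apply]
    rw [hω]
    by_cases hmem : ω ∈ A n
    · rw [Set.indicator_of_mem hmem, Set.indicator_of_mem hmem]
      show Real.exp (ψ (s ω) - ψ (β ω + s ω)) * Real.exp (ψ (β ω + s ω) - ψ (s ω)) = 1
      rw [← Real.exp_add, sub_add_sub_cancel, sub_self, Real.exp_zero]
    · rw [Set.indicator_of_notMem hmem, Set.indicator_of_notMem hmem, zero_mul]
  -- integrals of the truncated products are at most 1
  have hint_le : ∀ n, ∫ ω, fn n ω ∂μ ≤ 1 := by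
    intro n
    calc ∫ ω, fn n ω ∂μ = ∫ ω, (μ[fn n|𝒢]) ω ∂μ := (integral_condExp h𝒢).symm
      _ = ∫ ω, Set.indicator (A n) (fun _ => (1 : ℝ)) ω ∂μ := integral_congr_ae (hpull n)
      _ = (μ (A n)).toReal • (1 : ℝ) := @integral_indicator_const Ω ℝ m0 _ _ μ _ (1 : ℝ) (A n) (hAm0 n)
      _ = (μ (A n)).toReal := by rw [smul_eq_mul, mul_one]
      _ ≤ (μ Set.univ).toReal :=
          ENNReal.toReal_mono (measure_ne_top μ _) (measure_mono (Set.subset_univ _))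
      _ = 1 := by simp
  -- integrability of the full product
  have hFm0 : StronglyMeasurable[m0] (fun ω => c ω * g ω) := (hcmeas.mono h𝒢).mul hgmeas
  have hFint : Integrable (fun ω => c ω * g ω) μ := by
    refine ⟨hFm0.aestronglyMeasurable, ?_⟩
    rw [hasFiniteIntegral_iff_ofReal (Filter.Eventually.of_forall
      (fun ω => mul_nonneg (hcnonneg ω) (hgnonneg ω)))]
    have hMCT : ∫⁻ ω, ENNReal.ofReal (c ω * g ω) ∂μ
        = ⨆ n, ∫⁻ ω, ENNReal.ofReal (fn n ω) ∂μ := by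
      rw [← lintegral_iSup]
      · apply lintegral_congr
        intro ω
        obtain ⟨n, hn⟩ := hAcover ω
        apply le_antisymm
        · refine le_iSup_of_le n ?_
          simp only [hfn_def, Set.indicator_of_mem hn]
          exact le_rfl
        · refine iSup_le fun m => ENNReal.ofReal_le_ofReal ?_
          simp only [hfn_def]
          by_cases hm : ω ∈ A m
          · simp only [Set.indicator_of_mem hm]; exact le_refl _
          · simp only [Set.indicator_of_notMem hm, zero_mul]
            exact mul_nonneg (hcnonneg ω) (hgnonneg ω)
      · intro n
        exact ENNReal.measurable_ofReal.comp
          (((hfn_meas𝒢 n).mono h𝒢).measurable.mul hgmeas.measurable)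
      · intro m n hmn ω
        apply ENNReal.ofReal_le_ofReal
        apply mul_le_mul_of_nonneg_right _ (hgnonneg ω)
        by_cases hm : ω ∈ A m
        · rw [Set.indicator_of_mem hm, Set.indicator_of_mem (hAmono m n hmn hm)]
        · rw [Set.indicator_of_notMem hm]
          exact Set.indicator_nonneg (fun ω' _ => hcnonneg ω') ω
    rw [hMCT]
    refine lt_of_le_of_lt (iSup_le fun n => ?_) ENNReal.one_lt_top
    have hnn : 0 ≤ᵐ[μ] fn n := Filter.Eventually.of_forall
      (fun ω => mul_nonneg (Set.indicator_nonneg (fun ω' _ => hcnonneg ω') ω) (hgnonneg ω))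
    rw [← ofReal_integral_eq_lintegral_ofReal (hfn_int n) hnn]
    calc ENNReal.ofReal (∫ ω, fn n ω ∂μ) ≤ ENNReal.ofReal 1 :=
          ENNReal.ofReal_le_ofReal (hint_le n)
      _ = 1 := ENNReal.ofReal_one
  -- conditional expectation of the full product is 1
  have hmain : (μ[fun ω => c ω * g ω|𝒢]) =ᵐ[μ] fun _ => (1 : ℝ) := by
    have hind : ∀ n, (Set.indicator (A n) (fun ω => c ω * g ω)) = fn n := by
      intro n
      funext ω
      by_cases hm : ω ∈ A n
      · rw [Set.indicator_of_mem hm, hfn_def]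
        simp only [Set.indicator_of_mem hm]
      · rw [Set.indicator_of_notMem hm, hfn_def]
        simp only [Set.indicator_of_notMem hm, zero_mul]
    have hae : ∀ n, ∀ᵐ ω ∂μ, ω ∈ A n → (μ[fun ω => c ω * g ω|𝒢]) ω = 1 := by
      intro n
      have h1 := condExp_indicator hFint (hA𝒢 n)
      rw [hind n] at h1
      filter_upwards [h1.symm.trans (hpull n)] with ω hω hmem
      rw [Set.indicator_of_mem hmem, Set.indicator_of_mem hmem] at hω
      exact hω
    rw [← ae_all_iff] at hae
    filter_upwards [hae] with ω hω
    obtain ⟨n, hn⟩ := hAcover ω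
    exact hω n hn
  rw [hF]
  exact hmain
end
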